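/- Let f, g : ℝ² → ℝ be smooth with f_s(0,0) ≠ 0 and with Jacobian J := f_s(0,0)·g_t(0,0) − f_t(0,0)·g_s(0,0) ≠ 0, and let γ(x) = (3x², 2x³). For x ≠ 0 near 0 define the slope θ(x) = deriv (g ∘ γ) x / deriv (f ∘ γ) x and the second derivative of the image curve with respect to f, κ(x) = deriv θ x / deriv (f ∘ γ) x. Then x·κ(x) tends to J/(6·f_s(0,0)³) ≠ 0 as x → 0 within x ≠ 0; consequently κ(x) diverges to +∞ on one side of 0 and to −∞ on the other side (to +∞ as x → 0⁺ and −∞ as x → 0⁻ when J/f_s(0,0) > 0, and the other way when J/f_s(0,0) < 0). Hence the second derivative of the graphic diverges with opposite signs on the two branches meeting at a cusp: the cusp is of type one, i.e. the tangent line at the cusp separates the two branches, and the graphic has no type-two cusps. -/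

import Mathlib

/-!
Along `γ(x) = (3x², 2x³)` we have `γ'(x) = 6x · (1, x)`, so for `h = f, g` the chain rule gives
`(h ∘ γ)'(x) = 6x · A_h(x)` with `A_h(x) = Dh(γ x)(1, x)` (`reducedDeriv h x`) smooth. The
factor `6x` cancels in the slope, `θ = A_g / A_f`, and then
`x κ(x) = (A_g' A_f - A_g A_f') / (6 A_f³)` is continuous at `0`. Since `γ'(0) = 0`,
`A_h(0) = h_s(0,0)` and `A_h'(0) = h_t(0,0)`, so the limit is `J / (6 f_s³)`. Dividing by `x`
then sends `κ` to infinities of opposite signs on the two sides of `0`.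
-/

open Filter Topology

def cuspCurve (x : ℝ) : ℝ × ℝ := (3 * x ^ 2, 2 * x ^ 3)

noncomputable def reducedDeriv (h : ℝ × ℝ → ℝ) (x : ℝ) : ℝ := fderiv ℝ h (cuspCurve x) (1, x)

lemma cuspCurve_zero : cuspCurve 0 = (0, 0) := by simp [cuspCurve]

lemma hasDerivAt_cuspCurve (x : ℝ) : HasDerivAt cuspCurve ((6 * x) • (1, x)) x := by
  have h₁ : HasDerivAt (fun x : ℝ => 3 * x ^ 2) (6 * x) x :=
    ((hasDerivAt_pow 2 x).const_mul 3).congr_deriv (by ring)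
  have h₂ : HasDerivAt (fun x : ℝ => 2 * x ^ 3) (6 * x * x) x :=
    ((hasDerivAt_pow 3 x).const_mul 2).congr_deriv (by ring)
  exact (h₁.prodMk h₂).congr_deriv (by simp)

lemma contDiff_cuspCurve {n : WithTop ℕ∞} : ContDiff ℝ n cuspCurve := by
  unfold cuspCurve; fun_prop

lemma deriv_comp_cuspCurve {h : ℝ × ℝ → ℝ} {x : ℝ} (hh : DifferentiableAt ℝ h (cuspCurve x)) :
    deriv (h ∘ cuspCurve) x = 6 * x * reducedDeriv h x := by
  rw [(hh.hasFDerivAt.comp_hasDerivAt x (hasDerivAt_cuspCurve x)).deriv, map_smul, smul_eq_mul,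
    reducedDeriv]

lemma reducedDeriv_zero (h : ℝ × ℝ → ℝ) : reducedDeriv h 0 = fderiv ℝ h (0, 0) (1, 0) := by
  simp [reducedDeriv, cuspCurve_zero]

lemma contDiff_reducedDeriv {h : ℝ × ℝ → ℝ} {n : WithTop ℕ∞} (hh : ContDiff ℝ (n + 1) h) :
    ContDiff ℝ n (reducedDeriv h) :=
  ((hh.fderiv_right le_rfl).comp contDiff_cuspCurve).clm_apply
    (contDiff_const.prodMk contDiff_id)

/-- The cusp curve is stationary at `0`, so only the `(1, x)` factor contributes. -/
lemma hasDerivAt_reducedDeriv_zero {h : ℝ × ℝ → ℝ}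
    (hh : DifferentiableAt ℝ (fderiv ℝ h) (0, 0)) :
    HasDerivAt (reducedDeriv h) (fderiv ℝ h (0, 0) (0, 1)) 0 := by
  have hγ : HasDerivAt cuspCurve 0 0 := by simpa using hasDerivAt_cuspCurve 0
  rw [← cuspCurve_zero] at hh
  have hD : HasDerivAt (fderiv ℝ h ∘ cuspCurve) 0 0 := by
    simpa using hh.hasFDerivAt.comp_hasDerivAt 0 hγ
  unfold reducedDeriv
  simpa [cuspCurve_zero] using hD.clm_apply ((hasDerivAt_const 0 (1 : ℝ)).prodMk (hasDerivAt_id 0))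

lemma mul_deriv_slope_div_eq {F G A B : ℝ → ℝ} (hF : ∀ y, deriv F y = 6 * y * A y)
    (hG : ∀ y, deriv G y = 6 * y * B y) {x : ℝ} (hx : x ≠ 0)
    (hA : DifferentiableAt ℝ A x) (hB : DifferentiableAt ℝ B x) (hAx : A x ≠ 0) :
    x * (deriv (fun y => deriv G y / deriv F y) x / deriv F x)
      = (deriv B x * A x - B x * deriv A x) / (6 * A x ^ 3) := by
  have hslope : (fun y => deriv G y / deriv F y) =ᶠ[𝓝 x] B / A := by
    filter_upwards [isOpen_ne.mem_nhds hx] with y (hy : y ≠ 0)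
    rw [hG, hF, Pi.div_apply, mul_div_mul_left _ _ (by positivity)]
  rw [hslope.deriv_eq, deriv_div hB hA hAx, hF]
  field_simp

lemma tendsto_mul_deriv_slope_div {F G A B : ℝ → ℝ} (hF : ∀ y, deriv F y = 6 * y * A y)
    (hG : ∀ y, deriv G y = 6 * y * B y) (hA : ContDiff ℝ 1 A) (hB : ContDiff ℝ 1 B)
    (hA0 : A 0 ≠ 0) :
    Tendsto (fun x => x * (deriv (fun y => deriv G y / deriv F y) x / deriv F x)) (𝓝[≠] 0)
      (𝓝 ((deriv B 0 * A 0 - B 0 * deriv A 0) / (6 * A 0 ^ 3))) := by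
  have hcont : ContinuousAt (fun x => (deriv B x * A x - B x * deriv A x) / (6 * A x ^ 3)) 0 := by
    have := hA.continuous_deriv le_rfl
    have := hB.continuous_deriv le_rfl
    have := hA.continuous
    have := hB.continuous
    exact ContinuousAt.div (by fun_prop) (by fun_prop) (by positivity)
  refine (hcont.tendsto.mono_left nhdsWithin_le_nhds).congr' ?_
  filter_upwards [self_mem_nhdsWithin,
    nhdsWithin_le_nhds (hA.continuous.continuousAt.eventually_ne hA0)] with x hx hAx
  exact (mul_deriv_slope_div_eq hF hG hx (hA.differentiable one_ne_zero x)
    (hB.differentiable one_ne_zero x) hAx).symm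

lemma tendsto_atTop_atBot_of_tendsto_mul_pos {k : ℝ → ℝ} {l : ℝ}
    (hk : Tendsto (fun x => x * k x) (𝓝[≠] 0) (𝓝 l)) (hl : 0 < l) :
    Tendsto k (𝓝[>] 0) atTop ∧ Tendsto k (𝓝[<] 0) atBot := by
  have hdiv : ∀ s ⊆ ({0}ᶜ : Set ℝ), ∀ᶠ x in 𝓝[s] 0, x * k x * x⁻¹ = k x := fun s hs => by
    filter_upwards [self_mem_nhdsWithin] with x hx
    have : x ≠ 0 := hs hx
    field_simp
  exact ⟨((hk.mono_left (nhdsWithin_mono _ fun x hx => ne_of_gt hx)).pos_mul_atTop hl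
      tendsto_inv_nhdsGT_zero).congr' (hdiv _ fun x hx => ne_of_gt hx),
    ((hk.mono_left (nhdsWithin_mono _ fun x hx => ne_of_lt hx)).pos_mul_atBot hl
      tendsto_inv_nhdsLT_zero).congr' (hdiv _ fun x hx => ne_of_lt hx)⟩

lemma tendsto_atBot_atTop_of_tendsto_mul_neg {k : ℝ → ℝ} {l : ℝ}
    (hk : Tendsto (fun x => x * k x) (𝓝[≠] 0) (𝓝 l)) (hl : l < 0) :
    Tendsto k (𝓝[>] 0) atBot ∧ Tendsto k (𝓝[<] 0) atTop := by
  have hk' : Tendsto (fun x => x * -k x) (𝓝[≠] 0) (𝓝 (-l)) := by simpa using hk.neg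
  obtain ⟨hpos, hneg⟩ := tendsto_atTop_atBot_of_tendsto_mul_pos hk' (neg_pos.2 hl)
  exact ⟨(tendsto_neg_atTop_atBot.comp hpos).congr fun x => neg_neg (k x),
    (tendsto_neg_atBot_atTop.comp hneg).congr fun x => neg_neg (k x)⟩

/-- Type-one cusps: let `f, g : ℝ² → ℝ` be smooth with `f_s(0,0) ≠ 0` and Jacobian
`J = f_s(0,0)·g_t(0,0) − f_t(0,0)·g_s(0,0) ≠ 0`, let `γ(x) = (3x², 2x³)` be the cusp
image curve, let `θ(x) = (g ∘ γ)'(x)/(f ∘ γ)'(x)` be the slope of the graphic and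
`κ(x) = θ'(x)/(f ∘ γ)'(x)` its second derivative with respect to `f`. Then
`x·κ(x) → J/(6·f_s(0,0)³) ≠ 0` as `x → 0` within `x ≠ 0`; consequently `κ` diverges to
`+∞` on one side of `0` and to `−∞` on the other (according to the sign of `J/f_s(0,0)`):
the second derivative of the graphic diverges with opposite signs on the two branches,
so the cusp is of type one and the graphic has no type-two cusps. -/
theorem cusp_type_one (f g : ℝ × ℝ → ℝ)
    (hf : ContDiff ℝ (⊤ : ℕ∞) f) (hg : ContDiff ℝ (⊤ : ℕ∞) g)
    (hfs : fderiv ℝ f (0, 0) (1, 0) ≠ 0)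
    (J : ℝ)
    (hJdef : J = fderiv ℝ f (0, 0) (1, 0) * fderiv ℝ g (0, 0) (0, 1)
      - fderiv ℝ f (0, 0) (0, 1) * fderiv ℝ g (0, 0) (1, 0))
    (hJ : J ≠ 0)
    (γ : ℝ → ℝ × ℝ) (hγ : ∀ x : ℝ, γ x = (3 * x ^ 2, 2 * x ^ 3))
    (θ κ : ℝ → ℝ)
    (hθ : ∀ x : ℝ, θ x = deriv (g ∘ γ) x / deriv (f ∘ γ) x)
    (hκ : ∀ x : ℝ, κ x = deriv θ x / deriv (f ∘ γ) x) :
    Tendsto (fun x : ℝ => x * κ x) (𝓝[≠] 0)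
      (𝓝 (J / (6 * (fderiv ℝ f (0, 0) (1, 0)) ^ 3)))
    ∧ J / (6 * (fderiv ℝ f (0, 0) (1, 0)) ^ 3) ≠ 0
    ∧ (0 < J / fderiv ℝ f (0, 0) (1, 0) →
        Tendsto κ (𝓝[>] 0) atTop ∧ Tendsto κ (𝓝[<] 0) atBot)
    ∧ (J / fderiv ℝ f (0, 0) (1, 0) < 0 →
        Tendsto κ (𝓝[>] 0) atBot ∧ Tendsto κ (𝓝[<] 0) atTop) := by
  obtain rfl : γ = cuspCurve := funext hγ
  obtain rfl : θ = fun x => deriv (g ∘ cuspCurve) x / deriv (f ∘ cuspCurve) x := funext hθ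
  have hf₂ : ContDiff ℝ 2 f := hf.of_le (by norm_cast)
  have hg₂ : ContDiff ℝ 2 g := hg.of_le (by norm_cast)
  have hf' : HasDerivAt (reducedDeriv f) (fderiv ℝ f (0, 0) (0, 1)) 0 :=
    hasDerivAt_reducedDeriv_zero ((hf₂.fderiv_right le_rfl).differentiable one_ne_zero _)
  have hg' : HasDerivAt (reducedDeriv g) (fderiv ℝ g (0, 0) (0, 1)) 0 :=
    hasDerivAt_reducedDeriv_zero ((hg₂.fderiv_right le_rfl).differentiable one_ne_zero _)
  have hlim := tendsto_mul_deriv_slope_div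
    (fun y => deriv_comp_cuspCurve (hf₂.differentiable two_ne_zero _))
    (fun y => deriv_comp_cuspCurve (hg₂.differentiable two_ne_zero _))
    (contDiff_reducedDeriv hf₂) (contDiff_reducedDeriv hg₂) (by rwa [reducedDeriv_zero])
  rw [reducedDeriv_zero, reducedDeriv_zero, hf'.deriv, hg'.deriv] at hlim
  set c := fderiv ℝ f (0, 0) (1, 0)
  have hmain : Tendsto (fun x => x * κ x) (𝓝[≠] 0) (𝓝 (J / (6 * c ^ 3))) := by
    simp_rw [hκ, hJdef]
    convert hlim using 2
    field_simp
  have hsign : J / (6 * c ^ 3) = J / c / (6 * c ^ 2) := by field_simp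
  refine ⟨hmain, by positivity, fun hpos => ?_, fun hneg => ?_⟩
  · exact tendsto_atTop_atBot_of_tendsto_mul_pos hmain (hsign ▸ div_pos hpos (by positivity))
  · exact tendsto_atBot_atTop_of_tendsto_mul_neg hmain
      (hsign ▸ div_neg_of_neg_of_pos hneg (by positivity))
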